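/- limsup_{n→∞} 2·b(n) / (2n)^{log₃(√2+1)} ≤ 1. -/

import Mathlib

/-!
With `α = log₃ (1 + √2)` the function `x ↦ x ^ α` is concave on `[0, ∞)` and satisfies
`(3x) ^ α = (1 + √2) x ^ α`. Strong induction along the ternary recursion shows
`b n + b (n + 1) ≤ (2n + 1) ^ α` and `2 b n ≤ (2n + 1) ^ α`: the middle third of `[3q, 3q + 3]`
scales exactly, and the two outer thirds only need chord inequalities of the concave power.
Hence `2 b n / (2n) ^ α ≤ (1 + 1 / (2n)) ^ α`, which tends to `1`.
-/

open Real Filter Topology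

theorem limsup_le_of_le_of_tendsto {ι : Type*} {l : Filter ι} [l.NeBot] {u v : ι → ℝ} {c a : ℝ}
    (hc : ∀ i, c ≤ u i) (huv : u ≤ᶠ[l] v) (hv : Tendsto v l (𝓝 a)) : limsup u l ≤ a :=
  (limsup_le_limsup huv (isCoboundedUnder_le_of_le l hc) hv.isBoundedUnder_le).trans
    hv.limsup_eq.le

theorem tendsto_one_add_inv_two_mul_rpow (p : ℝ) :
    Tendsto (fun n : ℕ => (1 + (2 * (n : ℝ))⁻¹) ^ p) atTop (𝓝 1) := by
  have h : Tendsto (fun n : ℕ => 1 + (2 * (n : ℝ))⁻¹) atTop (𝓝 1) := by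
    simpa using tendsto_const_nhds.add (tendsto_inv_atTop_zero.comp
      (tendsto_natCast_atTop_atTop.const_mul_atTop (two_pos : (0 : ℝ) < 2)))
  simpa using h.rpow_const (Or.inl one_ne_zero)

namespace Northshield

noncomputable def exponent : ℝ := logb 3 (√2 + 1)

theorem exponent_nonneg : 0 ≤ exponent :=
  (logb_pos (by norm_num) (by linarith [one_lt_sqrt_two])).le

theorem exponent_le_one : exponent ≤ 1 :=
  calc exponent ≤ logb 3 3 :=
        logb_le_logb_of_le (by norm_num) (by positivity) (by linarith [sqrt_two_lt_three_halves])
    _ = 1 := logb_self_eq_one (by norm_num)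

theorem concaveOn_rpow_exponent : ConcaveOn ℝ (Set.Ici 0) fun x : ℝ => x ^ exponent :=
  concaveOn_rpow exponent_nonneg exponent_le_one

theorem rpow_exponent_mono {x y : ℝ} (hx : 0 ≤ x) (hxy : x ≤ y) : x ^ exponent ≤ y ^ exponent :=
  rpow_le_rpow hx hxy exponent_nonneg

theorem three_mul_rpow_exponent {x : ℝ} (hx : 0 ≤ x) :
    (3 * x) ^ exponent = (√2 + 1) * x ^ exponent := by
  rw [mul_rpow (by norm_num) hx, exponent, rpow_logb (by norm_num) (by norm_num) (by positivity)]

/-- Concavity at `2x`, the midpoint of `x` and `3x`. -/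
theorem rpow_exponent_le_two_mul {x : ℝ} (hx : 0 ≤ x) :
    (1 + √2 / 2) * x ^ exponent ≤ (2 * x) ^ exponent := by
  have h := concaveOn_rpow_exponent.2 (Set.mem_Ici.2 hx) (Set.mem_Ici.2 (by positivity : 0 ≤ 3 * x))
    (by norm_num : (0 : ℝ) ≤ 1 / 2) (by norm_num : (0 : ℝ) ≤ 1 / 2) (by norm_num)
  simp only [smul_eq_mul] at h
  rw [three_mul_rpow_exponent hx,
    show 1 / 2 * x + 1 / 2 * (3 * x) = 2 * x by ring] at h
  linarith

/-- `3x + 2 = 3 (x + 2/3)` and `x + 2/3` lies a third of the way from `x` to `x + 2`. -/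
theorem rpow_exponent_chord {x : ℝ} (hx : 0 ≤ x) :
    (√2 + 1) / 3 * ((x + 2) ^ exponent - x ^ exponent) ≤
      (3 * x + 2) ^ exponent - (3 * x) ^ exponent := by
  have h := concaveOn_rpow_exponent.2 (Set.mem_Ici.2 hx) (Set.mem_Ici.2 (by positivity : 0 ≤ x + 2))
    (by norm_num : (0 : ℝ) ≤ 2 / 3) (by norm_num : (0 : ℝ) ≤ 1 / 3) (by norm_num)
  simp only [smul_eq_mul] at h
  have hsplit : 3 * x + 2 = 3 * (2 / 3 * x + 1 / 3 * (x + 2)) := by ring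
  rw [hsplit, three_mul_rpow_exponent (by positivity), three_mul_rpow_exponent hx]
  linarith [mul_le_mul_of_nonneg_left h (by positivity : (0 : ℝ) ≤ √2 + 1)]

theorem two_mul_rpow_exponent_add_le {x : ℝ} (hx : 0 ≤ x) :
    2 * x ^ exponent + (√2 - 1) * (x + 2) ^ exponent ≤ (3 * x + 2) ^ exponent := by
  have hchord := rpow_exponent_chord hx
  have hmono := rpow_exponent_mono hx (by linarith : x ≤ x + 2)
  rw [three_mul_rpow_exponent hx] at hchord
  linarith [mul_le_mul_of_nonneg_left hmono (by linarith [sqrt_two_lt_three_halves] :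
    (0 : ℝ) ≤ 3 / 2 - √2)]

theorem rpow_exponent_add_le {x : ℝ} (hx : 0 ≤ x) :
    x ^ exponent + √2 / 2 * (x + 2) ^ exponent ≤ (3 * x + 2) ^ exponent := by
  have hchord := rpow_exponent_chord hx
  have hmono := rpow_exponent_mono hx (by linarith : x ≤ x + 2)
  have hpos : 0 ≤ x ^ exponent := rpow_nonneg hx _
  rw [three_mul_rpow_exponent hx] at hchord
  linarith [mul_le_mul_of_nonneg_left hmono (by linarith [sqrt_two_lt_three_halves] :
    (0 : ℝ) ≤ 2 - √2), mul_nonneg (sqrt_nonneg 2) hpos]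

structure IsNorthshield (b : ℕ → ℝ) : Prop where
  map_zero : b 0 = 0
  map_one : b 1 = 1
  three_mul : ∀ n, b (3 * n) = b n
  three_mul_add_one : ∀ n, b (3 * n + 1) = √2 * b n + b (n + 1)
  three_mul_add_two : ∀ n, b (3 * n + 2) = b n + √2 * b (n + 1)

def Dominated (b : ℕ → ℝ) (n : ℕ) : Prop :=
  b n + b (n + 1) ≤ (2 * (n : ℝ) + 1) ^ exponent ∧ 2 * b n ≤ (2 * (n : ℝ) + 1) ^ exponent

namespace IsNorthshield

variable {b : ℕ → ℝ}

theorem nonneg (hb : IsNorthshield b) (n : ℕ) : 0 ≤ b n := by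
  induction n using Nat.strong_induction_on with
  | _ n ih =>
    obtain ⟨q, rfl | rfl | rfl⟩ : ∃ q, n = 3 * q ∨ n = 3 * q + 1 ∨ n = 3 * q + 2 :=
      ⟨n / 3, by omega⟩
    · rcases Nat.eq_zero_or_pos q with rfl | hq
      · simp [hb.map_zero]
      · rw [hb.three_mul]; exact ih q (by omega)
    · rcases Nat.eq_zero_or_pos q with rfl | hq
      · simp [hb.map_one]
      · rw [hb.three_mul_add_one]
        have := ih q (by omega); have := ih (q + 1) (by omega); positivity
    · rw [hb.three_mul_add_two]
      have := ih q (by omega); have := ih (q + 1) (by omega); positivity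

theorem dominated_zero (hb : IsNorthshield b) : Dominated b 0 := by
  simp [Dominated, hb.map_zero, hb.map_one]

theorem dominated_one (hb : IsNorthshield b) : Dominated b 1 := by
  have hb2 : b 2 = √2 := by simpa [hb.map_zero, hb.map_one] using hb.three_mul_add_two 0
  have h3 : (3 : ℝ) ^ exponent = √2 + 1 := by simpa using three_mul_rpow_exponent zero_le_one
  refine ⟨?_, ?_⟩ <;> norm_num [hb.map_one, hb2, h3] <;> linarith [one_lt_sqrt_two]

theorem dominated_three_mul (hb : IsNorthshield b) {q : ℕ} (hq : 1 ≤ q) (h : Dominated b q) :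
    Dominated b (3 * q) := by
  have hq' : (1 : ℝ) ≤ q := by exact_mod_cast hq
  have hgrow : (2 * (2 * (q : ℝ) + 1)) ^ exponent ≤ (2 * ((3 * q : ℕ) : ℝ) + 1) ^ exponent :=
    rpow_exponent_mono (by positivity) (by push_cast; linarith)
  have hmono : (2 * (q : ℝ) + 1) ^ exponent ≤ (2 * ((3 * q : ℕ) : ℝ) + 1) ^ exponent :=
    rpow_exponent_mono (by positivity) (by push_cast; linarith)
  have hmid := rpow_exponent_le_two_mul (by positivity : (0 : ℝ) ≤ 2 * q + 1)
  obtain ⟨hsum, htwice⟩ := h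
  refine ⟨?_, ?_⟩
  · rw [hb.three_mul, hb.three_mul_add_one]
    linarith [mul_le_mul_of_nonneg_left htwice (by positivity : (0 : ℝ) ≤ √2 / 2)]
  · rw [hb.three_mul]; linarith

theorem dominated_three_mul_add_one (hb : IsNorthshield b) {q : ℕ} (h : Dominated b q) :
    Dominated b (3 * q + 1) := by
  have hu : 2 * ((3 * q + 1 : ℕ) : ℝ) + 1 = 3 * (2 * q + 1) := by push_cast; ring
  have hscale := three_mul_rpow_exponent (by positivity : (0 : ℝ) ≤ 2 * q + 1)
  have hs : (0 : ℝ) ≤ √2 - 1 := by linarith [one_lt_sqrt_two]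
  obtain ⟨hsum, htwice⟩ := h
  refine ⟨?_, ?_⟩
  · rw [show 3 * q + 1 + 1 = 3 * q + 2 from rfl, hu, hscale, hb.three_mul_add_one,
      hb.three_mul_add_two]
    linarith [mul_le_mul_of_nonneg_left hsum (by positivity : (0 : ℝ) ≤ √2 + 1)]
  · rw [hu, hscale, hb.three_mul_add_one]
    linarith [mul_le_mul_of_nonneg_left htwice hs]

theorem dominated_three_mul_add_two (hb : IsNorthshield b) {q : ℕ} (h : Dominated b q)
    (h' : Dominated b (q + 1)) : Dominated b (3 * q + 2) := by
  have hu : 2 * ((3 * q + 2 : ℕ) : ℝ) + 1 = 3 * (2 * q + 1) + 2 := by push_cast; ring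
  have hu' : 2 * ((q + 1 : ℕ) : ℝ) + 1 = (2 * q + 1) + 2 := by push_cast; ring
  have hx : (0 : ℝ) ≤ 2 * q + 1 := by positivity
  have hs : (0 : ℝ) ≤ √2 - 1 := by linarith [one_lt_sqrt_two]
  obtain ⟨hsum, -⟩ := h
  have htwice' := h'.2
  rw [hu'] at htwice'
  refine ⟨?_, ?_⟩
  · rw [show 3 * q + 2 + 1 = 3 * (q + 1) from rfl, hu, hb.three_mul, hb.three_mul_add_two]
    linarith [rpow_exponent_add_le hx,
      mul_le_mul_of_nonneg_left htwice' (by positivity : (0 : ℝ) ≤ √2 / 2)]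
  · rw [hu, hb.three_mul_add_two]
    linarith [two_mul_rpow_exponent_add_le hx, mul_le_mul_of_nonneg_left htwice' hs]

theorem dominated (hb : IsNorthshield b) (n : ℕ) : Dominated b n := by
  induction n using Nat.strong_induction_on with
  | _ n ih =>
    obtain ⟨q, rfl | rfl | rfl⟩ : ∃ q, n = 3 * q ∨ n = 3 * q + 1 ∨ n = 3 * q + 2 :=
      ⟨n / 3, by omega⟩
    · rcases Nat.eq_zero_or_pos q with rfl | hq
      · exact hb.dominated_zero
      · exact hb.dominated_three_mul hq (ih q (by omega))
    · rcases Nat.eq_zero_or_pos q with rfl | hq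
      · exact hb.dominated_one
      · exact hb.dominated_three_mul_add_one (ih q (by omega))
    · exact hb.dominated_three_mul_add_two (ih q (by omega)) (ih (q + 1) (by omega))

theorem two_mul_div_rpow_le (hb : IsNorthshield b) {n : ℕ} (hn : 1 ≤ n) :
    2 * b n / (2 * (n : ℝ)) ^ exponent ≤ (1 + (2 * (n : ℝ))⁻¹) ^ exponent := by
  have hn' : (0 : ℝ) < 2 * n := by positivity
  rw [show 1 + (2 * (n : ℝ))⁻¹ = (2 * n + 1) / (2 * n) by field_simp,
    div_rpow (by positivity) hn'.le]
  exact div_le_div_of_nonneg_right (hb.dominated n).2 (rpow_nonneg hn'.le _)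

end IsNorthshield

end Northshield

theorem northshield_limsup_le (b : ℕ → ℝ)
    (hb0 : b 0 = 0) (hb1 : b 1 = 1)
    (hrec0 : ∀ n : ℕ, b (3 * n) = b n)
    (hrec1 : ∀ n : ℕ, b (3 * n + 1) = Real.sqrt 2 * b n + b (n + 1))
    (hrec2 : ∀ n : ℕ, b (3 * n + 2) = b n + Real.sqrt 2 * b (n + 1)) :
    Filter.limsup
      (fun n : ℕ => 2 * b n / (2 * (n : ℝ)) ^ Real.logb 3 (Real.sqrt 2 + 1))
      Filter.atTop ≤ 1 := by
  have hb : Northshield.IsNorthshield b := ⟨hb0, hb1, hrec0, hrec1, hrec2⟩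
  refine limsup_le_of_le_of_tendsto (c := 0) (fun n => ?_) ?_
    (tendsto_one_add_inv_two_mul_rpow Northshield.exponent)
  · have := hb.nonneg n
    positivity
  · filter_upwards [eventually_ge_atTop 1] with n hn
    exact hb.two_mul_div_rpow_le hn
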